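/- arXiv:0809.4401 — 2 statements merged into one kernel-verified Lean document; each statement's English description precedes it below -/
import Mathlib

section
/- If a Hermitian d²×d² matrix X commutes with U ⊗ U for every unitary d×d matrix U, then there exist real numbers a, b such that X = a·P₊ + b·P₋ (equivalently, the commutant of the representation U ↦ U ⊗ U of U(d) on ℂ^d ⊗ ℂ^d is spanned by the projectors onto the symmetric and antisymmetric subspaces). -/
open Matrix
open scoped Kronecker

/-- The swap operator `S` on `ℂ^d ⊗ ℂ^d`. -/
def swapOp (d : ℕ) : Matrix (Fin d × Fin d) (Fin d × Fin d) ℂ :=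
  Matrix.of fun p q => if p.1 = q.2 ∧ p.2 = q.1 then 1 else 0

/-- The projector onto the symmetric subspace, `P₊ = (I + S)/2`. -/
noncomputable def Pplus (d : ℕ) : Matrix (Fin d × Fin d) (Fin d × Fin d) ℂ :=
  (2⁻¹ : ℂ) • (1 + swapOp d)

/-- The projector onto the antisymmetric subspace, `P₋ = (I - S)/2`. -/
noncomputable def Pminus (d : ℕ) : Matrix (Fin d × Fin d) (Fin d × Fin d) ℂ :=
  (2⁻¹ : ℂ) • (1 - swapOp d)

/-!
Testing `X` against three kinds of unitaries pins it down. Diagonal phases `diag(i at m, 1 else)`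
show that `X_{p,q} = 0` unless `p` and `q` are the same unordered pair; permutation matrices show
that the entries `X_{(i,j),(i,j)}` and `X_{(j,i),(i,j)}` with `i ≠ j` do not depend on `(i, j)`;
and one unitary mixing `e_i` with `e_j` forces
`X_{(i,i),(i,i)} = X_{(i,j),(i,j)} + X_{(j,i),(i,j)}`. Hence `X = α I + β S`, and Hermiticity
lets one replace `α, β` by their real parts.
-/

namespace Matrix

variable {n R : Type*} [Fintype n] [DecidableEq n] [CommRing R] [StarRing R]

theorem diagonal_mem_unitaryGroup {c : n → R} (hc : ∀ i, star (c i) * c i = 1) :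
    diagonal c ∈ unitaryGroup n R := by
  rw [mem_unitaryGroup_iff', star_eq_conjTranspose, diagonal_conjTranspose, diagonal_mul_diagonal]
  exact diagonal_eq_one.mpr (funext hc)

theorem permMatrix_mem_unitaryGroup (σ : Equiv.Perm n) :
    σ.permMatrix R ∈ unitaryGroup n R := by
  rw [mem_unitaryGroup_iff', star_eq_conjTranspose, conjTranspose_permMatrix, ← permMatrix_mul,
    mul_inv_cancel, permMatrix_one]

omit [Fintype n] [StarRing R] in
theorem permMatrix_kronecker_permMatrix {m : Type*} [DecidableEq m] (σ : Equiv.Perm n)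
    (τ : Equiv.Perm m) :
    σ.permMatrix R ⊗ₖ τ.permMatrix R = Equiv.Perm.permMatrix R (σ.prodCongr τ) := by
  ext ⟨a, b⟩ ⟨c, e⟩
  simp [kroneckerMap_apply, ← ite_and, and_comm]

theorem householder_mem_unitaryGroup {v : n → R} (hv : star v ⬝ᵥ v = 1) :
    1 - (2 : R) • vecMulVec v (star v) ∈ unitaryGroup n R := by
  rw [mem_unitaryGroup_iff', star_eq_conjTranspose, conjTranspose_sub, conjTranspose_one,
    conjTranspose_smul, conjTranspose_vecMulVec, star_star, sub_mul, mul_sub, mul_sub,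
    smul_mul_smul, vecMulVec_mul_vecMulVec, hv, one_smul, one_mul, mul_one, one_mul, star_ofNat]
  module

end Matrix

theorem ite_mul_ite_eq_one_iff_notMem_sym2 {n : Type*} [DecidableEq n] (a b m : n) :
    (if a = m then Complex.I else 1) * (if b = m then Complex.I else 1) = 1 ↔ m ∉ s(a, b) := by
  rw [Sym2.mem_iff]
  split_ifs <;> simp_all [eq_comm] <;> norm_num [Complex.ext_iff]

section TensorSquares

variable {n : Type*} [Fintype n] [DecidableEq n]

def CommutesWithTensorSquares (X : Matrix (n × n) (n × n) ℂ) : Prop :=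
  ∀ U : Matrix n n ℂ, U ∈ unitaryGroup n ℂ → (U ⊗ₖ U) * X = X * (U ⊗ₖ U)

namespace CommutesWithTensorSquares

variable {X : Matrix (n × n) (n × n) ℂ}

theorem mul_apply_eq_apply_mul_of_diagonal (hX : CommutesWithTensorSquares X) {c : n → ℂ}
    (hc : ∀ i, star (c i) * c i = 1) (p q : n × n) :
    c p.1 * c p.2 * X p q = X p q * (c q.1 * c q.2) := by
  have h := congrFun₂ (hX _ (diagonal_mem_unitaryGroup hc)) p q
  rwa [diagonal_kronecker_diagonal, diagonal_mul, mul_diagonal] at h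

theorem apply_eq_zero_of_sym2_ne (hX : CommutesWithTensorSquares X) {p q : n × n}
    (hpq : s(p.1, p.2) ≠ s(q.1, q.2)) : X p q = 0 := by
  by_contra hX0
  refine hpq (Sym2.ext fun m => ?_)
  have h := hX.mul_apply_eq_apply_mul_of_diagonal (c := fun x => if x = m then Complex.I else 1)
    (fun x => by split_ifs <;> simp) p q
  rw [mul_comm (X p q)] at h
  obtain ⟨a, b⟩ := p
  obtain ⟨c, e⟩ := q
  rw [← not_iff_not, ← ite_mul_ite_eq_one_iff_notMem_sym2, ← ite_mul_ite_eq_one_iff_notMem_sym2,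
    mul_right_cancel₀ hX0 h]

theorem apply_map_map (hX : CommutesWithTensorSquares X) (σ : Equiv.Perm n) (p q : n × n) :
    X (Prod.map σ σ p) (Prod.map σ σ q) = X p q := by
  have h := hX _ (permMatrix_mem_unitaryGroup σ)
  rw [permMatrix_kronecker_permMatrix, PEquiv.toMatrix_toPEquiv_mul,
    PEquiv.mul_toMatrix_toPEquiv] at h
  obtain ⟨a, b⟩ := q
  simpa using congrFun₂ h p (σ.prodCongr σ (a, b))

theorem apply_eq_of_ne (hX : CommutesWithTensorSquares X) {i j k l : n} (hij : i ≠ j)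
    (hkl : k ≠ l) :
    X (i, j) (i, j) = X (k, l) (k, l) ∧ X (j, i) (i, j) = X (l, k) (k, l) := by
  obtain ⟨σ, rfl, rfl⟩ : ∃ σ : Equiv.Perm n, σ • k = i ∧ σ • l = j :=
    MulAction.is_two_pretransitive_iff.mp (Equiv.Perm.isMultiplyPretransitive n 2) hkl hij
  exact ⟨hX.apply_map_map σ (k, l) (k, l), hX.apply_map_map σ (l, k) (k, l)⟩

theorem mul_apply_diag_eq (hX : CommutesWithTensorSquares X) {U : Matrix n n ℂ}
    (hU : U ∈ unitaryGroup n ℂ) {i j : n} (hij : i ≠ j) :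
    U i i * U i j * X (i, i) (i, i) = U i i * U i j * (X (i, j) (i, j) + X (j, i) (i, j)) := by
  have h := congrFun₂ (hX U hU) (i, i) (i, j)
  rw [mul_apply, mul_apply, Fintype.sum_eq_add (i, j) (j, i) (by simp [hij]),
    Fintype.sum_eq_single (i, i)] at h
  · simp only [kroneckerMap_apply] at h
    linear_combination -h
  · intro r hr
    refine mul_eq_zero_of_left (hX.apply_eq_zero_of_sym2_ne fun hs => hr ?_) _
    rcases Sym2.eq_iff.mp hs with ⟨h₁, h₂⟩ | ⟨h₂, h₁⟩ <;> exact Prod.ext h₁.symm h₂.symm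
  · rintro r ⟨hr₁, hr₂⟩
    refine mul_eq_zero_of_right _ (hX.apply_eq_zero_of_sym2_ne fun hs => ?_)
    rcases Sym2.mk_eq_mk_iff.mp hs with h | h
    exacts [hr₁ h, hr₂ (by simp [h])]

theorem apply_diag_eq (hX : CommutesWithTensorSquares X) {i j : n} (hij : i ≠ j) :
    X (i, i) (i, i) = X (i, j) (i, j) + X (j, i) (i, j) := by
  -- The Householder reflection in `(3/5) e_i + (4/5) e_j` has entries `7/25`, `-24/25` at `(i,i)`,
  -- `(i,j)`: any unitary with both entries nonzero would do.
  set v : n → ℂ := Pi.single i (3 / 5) + Pi.single j (4 / 5)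
  have hv : star v ⬝ᵥ v = 1 := by
    simp only [v, star_add, Pi.star_single, add_dotProduct, dotProduct_add, single_dotProduct,
      Pi.single_apply, hij, hij.symm]
    norm_num
  refine mul_left_cancel₀ ?_ (hX.mul_apply_diag_eq (householder_mem_unitaryGroup hv) hij)
  simp [v, vecMulVec_apply, hij, hij.symm]
  norm_num

theorem exists_eq_smul_one_add_smul_swapOp {d : ℕ} {X : Matrix (Fin d × Fin d) (Fin d × Fin d) ℂ}
    (hX : CommutesWithTensorSquares X) : ∃ α β : ℂ, X = α • 1 + β • swapOp d := by
  rcases subsingleton_or_nontrivial (Fin d) with _ | _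
  · refine ⟨X.trace, 0, ext fun p q => ?_⟩
    rw [Subsingleton.elim q p]
    simp [trace, Fintype.sum_subsingleton _ p]
  obtain ⟨i, j, hij⟩ := exists_pair_ne (Fin d)
  refine ⟨X (i, j) (i, j), X (j, i) (i, j), ext fun ⟨a, b⟩ ⟨c, e⟩ => ?_⟩
  have hoff {k l : Fin d} (hkl : k ≠ l) := hX.apply_eq_of_ne hkl hij
  have hdiag (k : Fin d) : X (k, k) (k, k) = X (i, j) (i, j) + X (j, i) (i, j) := by
    obtain ⟨l, hl⟩ := exists_ne k
    rw [hX.apply_diag_eq hl.symm, (hoff hl.symm).1, (hoff hl.symm).2]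
  simp only [Matrix.add_apply, Matrix.smul_apply, swapOp, of_apply, one_apply, smul_eq_mul,
    Prod.mk.injEq]
  by_cases hs : s(a, b) = s(c, e)
  · rcases Sym2.eq_iff.mp hs with ⟨rfl, rfl⟩ | ⟨rfl, rfl⟩ <;> by_cases hab : a = b
    · subst hab
      simp [hdiag]
    · simp [hab, ← (hoff hab).1]
    · subst hab
      simp [hdiag]
    · simp [hab, ← (hoff (Ne.symm hab)).2]
  · rw [hX.apply_eq_zero_of_sym2_ne hs, if_neg fun h => hs (by rw [h.1, h.2]),
      if_neg fun h => hs (by rw [h.1, h.2, Sym2.eq_swap]), mul_zero, mul_zero, add_zero]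

end CommutesWithTensorSquares

end TensorSquares

theorem swapOp_isHermitian (d : ℕ) : (swapOp d).IsHermitian := by
  ext p q
  simp [swapOp, conjTranspose_apply, and_comm, eq_comm]

theorem smul_one_add_smul_swapOp (d : ℕ) (α β : ℂ) :
    α • 1 + β • swapOp d = (α + β) • Pplus d + (α - β) • Pminus d := by
  unfold Pplus Pminus
  module

theorem Matrix.IsHermitian.eq_re_smul_add_re_smul {m : Type*} {X A B : Matrix m m ℂ}
    (hX : X.IsHermitian) (hA : A.IsHermitian) (hB : B.IsHermitian) {α β : ℂ}
    (h : X = α • A + β • B) : X = (α.re : ℂ) • A + (β.re : ℂ) • B := by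
  calc X = (2⁻¹ : ℂ) • (X + Xᴴ) := by rw [hX.eq]; module
    _ = (α.re : ℂ) • A + (β.re : ℂ) • B := by
      rw [h, conjTranspose_add, conjTranspose_smul, conjTranspose_smul, hA.eq, hB.eq,
        Complex.re_eq_add_conj, Complex.re_eq_add_conj, Complex.star_def]
      module

theorem commutant_of_tensor_unitaries_general (d : ℕ)
    (X : Matrix (Fin d × Fin d) (Fin d × Fin d) ℂ) (hX : X.IsHermitian)
    (hcomm : ∀ U : Matrix (Fin d) (Fin d) ℂ, U ∈ Matrix.unitaryGroup (Fin d) ℂ →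
      (U ⊗ₖ U) * X = X * (U ⊗ₖ U)) :
    ∃ a b : ℝ, X = (a : ℂ) • Pplus d + (b : ℂ) • Pminus d := by
  obtain ⟨α, β, hαβ⟩ := CommutesWithTensorSquares.exists_eq_smul_one_add_smul_swapOp hcomm
  refine ⟨α.re + β.re, α.re - β.re, ?_⟩
  rw [hX.eq_re_smul_add_re_smul isHermitian_one (swapOp_isHermitian d) hαβ,
    smul_one_add_smul_swapOp, Complex.ofReal_add, Complex.ofReal_sub]

/-- A Hermitian matrix on `ℂ^d ⊗ ℂ^d` commuting with `U ⊗ U`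
for every unitary `U` is a real linear combination of `P₊` and `P₋`. -/
theorem commutant_of_tensor_unitaries (d : ℕ) (hd : 1 ≤ d)
    (X : Matrix (Fin d × Fin d) (Fin d × Fin d) ℂ) (hX : X.IsHermitian)
    (hcomm : ∀ U : Matrix (Fin d) (Fin d) ℂ, U ∈ Matrix.unitaryGroup (Fin d) ℂ →
      (U ⊗ₖ U) * X = X * (U ⊗ₖ U)) :
    ∃ a b : ℝ, X = (a : ℂ) • Pplus d + (b : ℂ) • Pminus d :=
  commutant_of_tensor_unitaries_general d X hX hcomm
end

section
/- (Optimality of antisymmetric test states) Let ξ be a density matrix on ℂ^d ⊗ ℂ^d that is antisymmetric, i.e. P₋ ξ P₋ = ξ. Then M_diff := ξᵀ ⊗ P₊ and M_? := ξᵀ ⊗ P₋ are positive semidefinite d⁴×d⁴ matrices with M_diff + M_? = ξᵀ ⊗ I_{d²}, they satisfy the no-error condition tr(ω_{U⊗U} M_diff) = 0 for every U ∈ U(d), and they attain the optimal success probability (1/d²) tr(M_diff) = (d+1)/(2d). -/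
open MeasureTheory Matrix
open scoped Kronecker ComplexOrder

noncomputable instance matNormedAddCommGroup {m n : Type*} [Fintype m] [Fintype n] :
    NormedAddCommGroup (Matrix m n ℂ) := Matrix.frobeniusNormedAddCommGroup
noncomputable instance matNormedSpace {m n : Type*} [Fintype m] [Fintype n] :
    NormedSpace ℝ (Matrix m n ℂ) := Matrix.frobeniusNormedSpace

noncomputable instance {d : ℕ} :
    MeasurableSpace (Matrix.unitaryGroup (Fin d) ℂ) := borel _
instance {d : ℕ} : BorelSpace (Matrix.unitaryGroup (Fin d) ℂ) := ⟨rfl⟩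

/-- The unnormalized maximally entangled vector `|Ψ⁺⟩ = Σ_a e_a ⊗ e_a` on
`ℂ^D ⊗ ℂ^D` for `D = d²`. -/
def psiPlusVec (d : ℕ) : (Fin d × Fin d) × (Fin d × Fin d) → ℂ :=
  fun p => if p.1 = p.2 then 1 else 0

/-- The rank-one operator `Ψ⁺ = |Ψ⁺⟩⟨Ψ⁺|`. -/
noncomputable def psiPlus (d : ℕ) :
    Matrix ((Fin d × Fin d) × (Fin d × Fin d)) ((Fin d × Fin d) × (Fin d × Fin d)) ℂ :=
  Matrix.vecMulVec (psiPlusVec d) (star (psiPlusVec d))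

/-- Choi operator `ω_{U⊗V} = (I_D ⊗ (U ⊗ V)) Ψ⁺ (I_D ⊗ (U ⊗ V))†` of the product
channel `E_U ⊗ E_V`. -/
noncomputable def omegaUV (d : ℕ) (U V : Matrix (Fin d) (Fin d) ℂ) :
    Matrix ((Fin d × Fin d) × (Fin d × Fin d)) ((Fin d × Fin d) × (Fin d × Fin d)) ℂ :=
  ((1 : Matrix (Fin d × Fin d) (Fin d × Fin d) ℂ) ⊗ₖ (U ⊗ₖ V)) * psiPlus d *
    ((1 : Matrix (Fin d × Fin d) (Fin d × Fin d) ℂ) ⊗ₖ (U ⊗ₖ V))ᴴ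

/-! The operators `P₊` and `P₋ = 1 - P₊` are complementary orthogonal projections, which gives
positivity and completeness. Because `U ⊗ U` commutes with the swap, it commutes with `P₋`; the Choi
identity `tr(ω_{U⊗U} (ξᵀ ⊗ Y)) = tr(ξ (U ⊗ U)† Y (U ⊗ U))` and `ξ = P₋ ξ P₋` then move a `P₋` next to
`P₊`, and `P₋ P₊ = 0` kills the error term. The success probability is `tr ξ · tr P₊ / d²`
with `tr P₊ = (d² + d)/2`. -/

section SwapProjectors

variable {d : ℕ}

lemma swapOp_mul_swapOp : swapOp d * swapOp d = 1 := by
  ext ⟨i, j⟩ ⟨k, l⟩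
  simp [swapOp, mul_apply, one_apply, Fintype.sum_prod_type, ite_and, Prod.ext_iff]

lemma conjTranspose_swapOp : (swapOp d)ᴴ = swapOp d := by
  ext ⟨i, j⟩ ⟨k, l⟩
  simp only [swapOp, conjTranspose_apply, of_apply]
  split <;> split <;> simp_all

lemma kronecker_mul_swapOp (U V : Matrix (Fin d) (Fin d) ℂ) :
    (U ⊗ₖ V) * swapOp d = swapOp d * (V ⊗ₖ U) := by
  ext ⟨i, j⟩ ⟨k, l⟩
  simp [swapOp, mul_apply, kroneckerMap_apply, Fintype.sum_prod_type, ite_and, mul_comm]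

lemma trace_swapOp : (swapOp d).trace = d := by
  simp [trace, swapOp, Fintype.sum_prod_type, ite_and]

lemma isStarProjection_Pplus : IsStarProjection (Pplus d) where
  isIdempotentElem := by
    simp only [IsIdempotentElem, Pplus, smul_mul_smul_comm, add_mul, mul_add, one_mul, mul_one,
      swapOp_mul_swapOp]
    module
  isSelfAdjoint := by
    rw [IsSelfAdjoint, Pplus, star_smul, star_add, star_one, star_eq_conjTranspose,
      conjTranspose_swapOp]
    norm_num

lemma Pminus_eq_one_sub_Pplus : Pminus d = 1 - Pplus d := by
  unfold Pplus Pminus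
  module

lemma Pplus_add_Pminus : Pplus d + Pminus d = 1 := by
  rw [Pminus_eq_one_sub_Pplus, add_sub_cancel]

lemma Pminus_mul_Pplus : Pminus d * Pplus d = 0 := by
  rw [Pminus_eq_one_sub_Pplus, sub_mul, one_mul, isStarProjection_Pplus.isIdempotentElem.eq,
    sub_self]

open scoped MatrixOrder in
lemma posSemidef_Pplus : (Pplus d).PosSemidef :=
  nonneg_iff_posSemidef.mp isStarProjection_Pplus.nonneg

open scoped MatrixOrder in
lemma posSemidef_Pminus : (Pminus d).PosSemidef := by
  rw [Pminus_eq_one_sub_Pplus]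
  exact nonneg_iff_posSemidef.mp isStarProjection_Pplus.one_sub.nonneg

lemma commute_kronecker_self_Pminus (U : Matrix (Fin d) (Fin d) ℂ) :
    Commute (U ⊗ₖ U) (Pminus d) := by
  rw [Commute, SemiconjBy, Pminus, mul_smul_comm, smul_mul_assoc, mul_sub, sub_mul, mul_one,
    one_mul, kronecker_mul_swapOp]

lemma trace_Pplus : (Pplus d).trace = ((d : ℂ) ^ 2 + d) / 2 := by
  rw [Pplus, trace_smul, trace_add, trace_one, trace_swapOp, Fintype.card_prod, Fintype.card_fin,
    smul_eq_mul]
  push_cast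
  ring

end SwapProjectors

section ChoiOperator

variable {d : ℕ}

lemma trace_psiPlus_mul_kronecker (X Y : Matrix (Fin d × Fin d) (Fin d × Fin d) ℂ) :
    (psiPlus d * (Xᵀ ⊗ₖ Y)).trace = (X * Y).trace := by
  simp [trace, mul_apply, psiPlus, vecMulVec_apply, psiPlusVec, kroneckerMap_apply,
    Fintype.sum_prod_type, apply_ite (star : ℂ → ℂ), ite_mul]

lemma trace_omegaUV_mul_kronecker (U V : Matrix (Fin d) (Fin d) ℂ)
    (X Y : Matrix (Fin d × Fin d) (Fin d × Fin d) ℂ) :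
    (omegaUV d U V * (Xᵀ ⊗ₖ Y)).trace = (X * ((U ⊗ₖ V)ᴴ * Y * (U ⊗ₖ V))).trace := by
  set W := U ⊗ₖ V
  have hconj : (1 ⊗ₖ W)ᴴ * (Xᵀ ⊗ₖ Y) * (1 ⊗ₖ W) = Xᵀ ⊗ₖ (Wᴴ * Y * W) := by
    rw [conjTranspose_kronecker, conjTranspose_one, ← mul_kronecker_mul, ← mul_kronecker_mul,
      one_mul, mul_one]
  rw [omegaUV, trace_mul_cycle, ← mul_assoc, trace_mul_cycle, ← mul_assoc, hconj, trace_mul_comm,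
    trace_psiPlus_mul_kronecker]

end ChoiOperator

lemma mul_conj_Pplus_eq_zero_of_antisymmetric {d : ℕ}
    {ξ : Matrix (Fin d × Fin d) (Fin d × Fin d) ℂ} (hanti : Pminus d * ξ * Pminus d = ξ)
    (U : Matrix (Fin d) (Fin d) ℂ) : ξ * ((U ⊗ₖ U)ᴴ * Pplus d * (U ⊗ₖ U)) = 0 := by
  have hcomm : Commute (U ⊗ₖ U)ᴴ (Pminus d) := by
    rw [conjTranspose_kronecker]
    exact commute_kronecker_self_Pminus Uᴴ
  calc ξ * ((U ⊗ₖ U)ᴴ * Pplus d * (U ⊗ₖ U))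
      = Pminus d * ξ * ((U ⊗ₖ U)ᴴ * (Pminus d * Pplus d) * (U ⊗ₖ U)) := by
        conv_lhs => rw [← hanti]
        simp only [mul_assoc]
        rw [← hcomm.left_comm]
    _ = 0 := by rw [Pminus_mul_Pplus, mul_zero, zero_mul, mul_zero]

theorem antisymmetric_test_state_optimal_general (d : ℕ)
    (ξ : Matrix (Fin d × Fin d) (Fin d × Fin d) ℂ)
    (hξ : ξ.PosSemidef) (hξtr : ξ.trace = 1)
    (hanti : Pminus d * ξ * Pminus d = ξ) :
    (ξᵀ ⊗ₖ Pplus d).PosSemidef ∧ (ξᵀ ⊗ₖ Pminus d).PosSemidef ∧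
    ξᵀ ⊗ₖ Pplus d + ξᵀ ⊗ₖ Pminus d =
      ξᵀ ⊗ₖ (1 : Matrix (Fin d × Fin d) (Fin d × Fin d) ℂ) ∧
    (∀ U : Matrix (Fin d) (Fin d) ℂ, U ∈ Matrix.unitaryGroup (Fin d) ℂ →
      (omegaUV d U U * (ξᵀ ⊗ₖ Pplus d)).trace = 0) ∧
    (ξᵀ ⊗ₖ Pplus d).trace.re / (d : ℝ) ^ 2 = ((d : ℝ) + 1) / (2 * d) := by
  refine ⟨hξ.transpose.kronecker posSemidef_Pplus, hξ.transpose.kronecker posSemidef_Pminus,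
    by rw [← kronecker_add, Pplus_add_Pminus], fun U _ => ?_, ?_⟩
  · rw [trace_omegaUV_mul_kronecker, mul_conj_Pplus_eq_zero_of_antisymmetric hanti, trace_zero]
  · have htrace : (ξᵀ ⊗ₖ Pplus d).trace = (((d : ℝ) ^ 2 + d) / 2 : ℝ) := by
      rw [trace_kronecker, trace_transpose, hξtr, one_mul, trace_Pplus]
      push_cast
      rfl
    rw [htrace, Complex.ofReal_re]
    rcases eq_or_ne (d : ℝ) 0 with hd | hd
    · simp [hd]
    · field_simp

/-- For an antisymmetric test state `ξ`, the PPOVM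
`M_diff = ξᵀ ⊗ P₊`, `M_? = ξᵀ ⊗ P₋` is a valid unambiguous comparator reaching the
optimal success probability `(d+1)/(2d)`. -/
theorem antisymmetric_test_state_optimal (d : ℕ) (hd : 2 ≤ d)
    (ξ : Matrix (Fin d × Fin d) (Fin d × Fin d) ℂ)
    (hξ : ξ.PosSemidef) (hξtr : ξ.trace = 1)
    (hanti : Pminus d * ξ * Pminus d = ξ) :
    (ξᵀ ⊗ₖ Pplus d).PosSemidef ∧ (ξᵀ ⊗ₖ Pminus d).PosSemidef ∧
    ξᵀ ⊗ₖ Pplus d + ξᵀ ⊗ₖ Pminus d =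
      ξᵀ ⊗ₖ (1 : Matrix (Fin d × Fin d) (Fin d × Fin d) ℂ) ∧
    (∀ U : Matrix (Fin d) (Fin d) ℂ, U ∈ Matrix.unitaryGroup (Fin d) ℂ →
      (omegaUV d U U * (ξᵀ ⊗ₖ Pplus d)).trace = 0) ∧
    (ξᵀ ⊗ₖ Pplus d).trace.re / (d : ℝ) ^ 2 = ((d : ℝ) + 1) / (2 * d) :=
  antisymmetric_test_state_optimal_general d ξ hξ hξtr hanti
end
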